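/- If a finite RCM has a rational-valued probability distribution over its units, then its counterfactual distribution equals that of an RCM whose distribution on units is uniform (possibly with a larger unit set). -/
import Mathlib


open scoped Classical

/-- An intervention: a partial assignment of values to variables. -/
def Itv (V : Type*) (Val : V → Type*) := ∀ v, Option (Val v)

/-- A potential outcome `Y_x`: an outcome variable together with an intervention. -/
structure PO (V : Type*) (Val : V → Type*) where
  Y : V
  x : Itv V Val

/-- A Rubin causal model (with a probability distribution on its units). -/
structure RCM (U : Type*) (V : Type*) (Val : V → Type*) where
  O : Set (PO V Val)
  F : (o : PO V Val) → U → Val o.Y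
  P : U → ℝ
  P_nonneg : ∀ u, 0 ≤ P u
  P_sum : ∑ᶠ u, P u = 1

/-- Joint valuations ("counterfactuals") of a set of potential outcomes. -/
def CFVal {V : Type*} {Val : V → Type*} (O : Set (PO V Val)) :=
  (o : O) → Val o.1.Y

/-- The (pushforward) counterfactual distribution of an RCM, computed on a set
of potential outcomes. -/
noncomputable def RCM.cfOn {U V : Type*} {Val : V → Type*} (R : RCM U V Val)
    (O : Set (PO V Val)) (g : CFVal O) : ℝ :=
  ∑ᶠ u, if ∀ o : O, R.F o.1 u = g o then R.P u else 0

/-- The counterfactual distribution of an RCM on its own defined outcomes. -/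
noncomputable def RCM.cf {U V : Type*} {Val : V → Type*} (R : RCM U V Val)
    (g : CFVal R.O) : ℝ := R.cfOn R.O g

/-- Effectiveness: intervened variables take their intervened values. -/
def RCM.Effective {U V : Type*} {Val : V → Type*} (R : RCM U V Val) : Prop :=
  ∀ o, o ∈ R.O → ∀ u, ∀ y : Val o.Y, o.x o.Y = some y → R.F o u = y

/-- Update an intervention at one variable. -/
noncomputable def upd {V : Type*} {Val : V → Type*} (x : Itv V Val) (Y : V) (y : Val Y) :
    Itv V Val :=
  fun v => if h : v = Y then some (cast (congrArg Val h.symm) y) else x v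

/-- Composition, at every unit, whenever the relevant outcomes are defined. -/
def RCM.Composition {U V : Type*} {Val : V → Type*} (R : RCM U V Val) : Prop :=
  ∀ (u : U) (Y Z : V) (w : Itv V Val),
    (⟨Y, w⟩ : PO V Val) ∈ R.O → (⟨Z, w⟩ : PO V Val) ∈ R.O →
    (⟨Z, upd w Y (R.F ⟨Y, w⟩ u)⟩ : PO V Val) ∈ R.O →
    R.F ⟨Z, upd w Y (R.F ⟨Y, w⟩ u)⟩ u = R.F ⟨Z, w⟩ u

/-- Reversibility, at every unit, whenever the relevant outcomes are defined. -/
def RCM.Reversibility {U V : Type*} {Val : V → Type*} (R : RCM U V Val) : Prop :=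
  ∀ (u : U) (Y Z : V) (w : Itv V Val) (y : Val Y) (z : Val Z), Y ≠ Z →
    (⟨Y, upd w Z z⟩ : PO V Val) ∈ R.O → (⟨Z, upd w Y y⟩ : PO V Val) ∈ R.O →
    (⟨Y, w⟩ : PO V Val) ∈ R.O →
    R.F ⟨Y, upd w Z z⟩ u = y → R.F ⟨Z, upd w Y y⟩ u = z →
    R.F ⟨Y, w⟩ u = y

/-- A structural causal model. -/
structure SCM (Uex : Type*) (V : Type*) (Val : V → Type*) where
  Pa : V → Set V
  Pa_irr : ∀ v, v ∉ Pa v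
  f : (v : V) → ((w : V) → Val w) → Uex → Val v
  f_dep : ∀ v a b u, (∀ w ∈ Pa v, a w = b w) → f v a u = f v b u
  P : Uex → ℝ
  P_nonneg : ∀ u, 0 ≤ P u
  P_sum : ∑ᶠ u, P u = 1

/-- `s` solves the manipulated model `M_x` under exogenous setting `u`. -/
def SCM.IsSol {Uex V : Type*} {Val : V → Type*} (M : SCM Uex V Val)
    (x : Itv V Val) (u : Uex) (s : ∀ w, Val w) : Prop :=
  ∀ w, s w = (x w).getD (M.f w s u)

/-- `M` has a unique solution under every intervention and exogenous setting. -/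
def SCM.Uniq {Uex V : Type*} {Val : V → Type*} (M : SCM Uex V Val) : Prop :=
  ∀ (x : Itv V Val) (u : Uex), ∃! s, M.IsSol x u s

/-- The potential outcome `Y_x(u)` of an SCM with unique solutions. -/
noncomputable def SCM.po {Uex V : Type*} {Val : V → Type*} (M : SCM Uex V Val)
    (h : M.Uniq) (o : PO V Val) (u : Uex) : Val o.Y :=
  (h o.x u).exists.choose o.Y

/-- The counterfactual distribution of an SCM on a set of potential outcomes. -/
noncomputable def SCM.cf {Uex V : Type*} {Val : V → Type*} (M : SCM Uex V Val)
    (h : M.Uniq) (O : Set (PO V Val)) (g : CFVal O) : ℝ :=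
  ∑ᶠ u, if ∀ o : O, M.po h o.1 u = g o then M.P u else 0

/-- `M` represents `R`: the counterfactual distribution of `M` marginalizes to
that of `R` on the outcomes defined by `R`. -/
def Represents {Uex U V : Type*} {Val : V → Type*} (M : SCM Uex V Val) (h : M.Uniq)
    (R : RCM U V Val) : Prop :=
  ∀ g : CFVal R.O, M.cf h R.O g = R.cf g

/-- `R` is representable by some SCM with unique solutions. -/
def RCM.Representable {U V : Type*} {Val : V → Type*} (R : RCM U V Val) : Prop :=
  ∃ (Uex : Type) (M : SCM Uex V Val) (h : M.Uniq), Finite Uex ∧ Represents M h R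

/-- `R'` extends `R`. -/
def RCM.Extends {U V : Type*} {Val : V → Type*} (R' R : RCM U V Val) : Prop :=
  R.O ⊆ R'.O ∧ (∀ o ∈ R.O, R'.F o = R.F o) ∧ R'.P = R.P

/-- A full RCM defines every potential outcome. -/
def RCM.Full {U V : Type*} {Val : V → Type*} (R : RCM U V Val) : Prop :=
  R.O = Set.univ

/-- `R'` is a submodel of `R`. -/
def Submodel {U V : Type*} {Val : V → Type*} (R' R : RCM U V Val) : Prop :=
  R'.O ⊆ R.O ∧ (∀ o ∈ R'.O, R'.F o = R.F o) ∧ R'.P = R.P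

/-- If a finite RCM has a rational-valued probability distribution over its
units, then its counterfactual distribution equals that of an RCM whose
distribution on units is uniform (over a possibly larger unit set). -/
theorem stmt0 {U V : Type} {Val : V → Type} [Finite U] [Finite V]
    [∀ v, Finite (Val v)] (R : RCM U V Val)
    (hQ : ∀ u, ∃ q : ℚ, R.P u = (q : ℝ)) :
    ∃ (U' : Type) (_ : Finite U') (R' : RCM U' V Val),
      R'.O = R.O ∧ (∀ u u' : U', R'.P u = R'.P u') ∧
      ∀ g : CFVal R.O, R'.cfOn R.O g = R.cf g := by
  classical
  have _fin : Fintype U := Fintype.ofFinite U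
  choose q hq using hQ
  have hq0 : ∀ u, 0 ≤ q u := by
    intro u
    have h := R.P_nonneg u
    rw [hq u] at h
    exact_mod_cast h
  set d : ℕ := ∏ u, (q u).den with hd
  have hdpos : 0 < d := Finset.prod_pos (fun u _ => (q u).pos)
  have hdvd : ∀ u, (q u).den ∣ d := fun u => Finset.dvd_prod_of_mem _ (Finset.mem_univ u)
  set n : U → ℕ := fun u => (q u).num.toNat * (d / (q u).den) with hn
  have hnq : ∀ u, (n u : ℚ) = q u * d := by
    intro u
    obtain ⟨m, hm⟩ := hdvd u
    have h1 : ((q u).num.toNat : ℤ) = (q u).num :=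
      Int.toNat_of_nonneg (Rat.num_nonneg.mpr (hq0 u))
    have h2 : d / (q u).den = m := by rw [hm, Nat.mul_div_cancel_left _ (q u).pos]
    have hden : ((q u).den : ℚ) ≠ 0 := Nat.cast_ne_zero.mpr (q u).den_nz
    have h3 : (q u) * ((q u).den : ℚ) = ((q u).num : ℚ) := by
      conv_lhs => lhs; rw [← Rat.num_div_den (q u)]
      exact div_mul_cancel₀ _ hden
    calc (n u : ℚ) = ((q u).num.toNat : ℚ) * (m : ℚ) := by rw [hn]; push_cast [h2]; ring
      _ = ((q u).num : ℚ) * m := by exact_mod_cast congrArg (fun z : ℤ => (z : ℚ) * m) h1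
      _ = q u * (q u).den * m := by rw [h3]
      _ = q u * d := by rw [hm]; push_cast; ring
  have hnR : ∀ u, (n u : ℝ) / d = R.P u := by
    intro u
    have h : (n u : ℝ) = (q u : ℝ) * d := by exact_mod_cast hnq u
    rw [h, hq u]
    field_simp
  have hsum1 : ∑ u, R.P u = 1 := by
    rw [← finsum_eq_sum_of_fintype]; exact R.P_sum
  refine ⟨Σ u : U, Fin (n u), inferInstance,
    { O := R.O
      F := fun o p => R.F o p.1
      P := fun _ => (d : ℝ)⁻¹
      P_nonneg := fun _ => by positivity
      P_sum := ?_ }, rfl, fun _ _ => rfl, ?_⟩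
  · rw [finsum_eq_sum_of_fintype, Finset.sum_const, Finset.card_univ, Fintype.card_sigma]
    simp only [Fintype.card_fin, nsmul_eq_mul]
    have hs : (∑ u, (n u : ℝ)) = d := by
      have hh : ∀ u, (n u : ℝ) = R.P u * d := by
        intro u
        rw [← hnR u]
        field_simp
      rw [Finset.sum_congr rfl (fun u _ => hh u), ← Finset.sum_mul, hsum1, one_mul]
    push_cast
    rw [hs]
    field_simp
  · intro g
    simp only [RCM.cf, RCM.cfOn, finsum_eq_sum_of_fintype]
    rw [show (Finset.univ : Finset ((u : U) × Fin (n u))) =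
        Finset.univ.sigma (fun _ => Finset.univ) from rfl, Finset.sum_sigma]
    refine Finset.sum_congr rfl (fun u _ => ?_)
    show (∑ _s : Fin (n u), if ∀ o : ↑R.O, R.F o.1 u = g o then (d : ℝ)⁻¹ else 0) = _
    rw [Finset.sum_const]
    simp only [Finset.card_univ, Fintype.card_fin, nsmul_eq_mul]
    by_cases h : ∀ o : R.O, R.F o.1 u = g o
    · rw [if_pos h, if_pos h, ← hnR u]
      field_simp
    · rw [if_neg h, if_neg h, mul_zero]
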